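/- arXiv:0910.1263 — 2 statements merged into one kernel-verified Lean document; each statement's English description precedes it below -/
import Mathlib

section
/- Let a(n) denote the number of pairs of partitions (λ, μ) with |λ| + |μ| = n where all parts of μ are even (equivalently, the coefficients of ∏_{n≥1} 1/((1-q^n)(1-q^{2n}))). Then for every nonnegative integer n, a(3n+2) ≡ 0 (mod 3). -/
/-- The cubic partition function: number of pairs of partitions (λ, μ) with
|λ| + |μ| = n where all parts of μ are even. -/
def cubicPartition (n : ℕ) : ℕ :=
  ∑ j ∈ Finset.range (n + 1),
    Fintype.card (Nat.Partition j) *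
      Fintype.card {μ : Nat.Partition (n - j) // ∀ i ∈ μ.parts, Even i}

open PowerSeries Finset

namespace Cubic3

noncomputable section

abbrev K := ZMod 3

instance : Fact (Nat.Prime 3) := ⟨by norm_num⟩

abbrev PS := PowerSeries K

/-- `E n = ∏_{k=1}^{n} (1 - X^{2k})`. -/
def E (n : ℕ) : PS := ∏ k ∈ range n, (1 - X ^ (2 * k + 2))

/-- `AO n = ∏_{k=1}^{n} (1 - X^{2k-1})`. -/
def AO (n : ℕ) : PS := ∏ k ∈ range n, (1 - X ^ (2 * k + 1))

/-- Gaussian binomial coefficients in `X^2`, defined via the q-Pascal recursion. -/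
def G : ℕ → ℕ → PS
  | 0, 0 => 1
  | 0, _ + 1 => 0
  | _ + 1, 0 => 1
  | a + 1, b + 1 => G a (b + 1) + X ^ (2 * (a - b)) * G a b

@[simp] lemma G_zero_right (a : ℕ) : G a 0 = 1 := by cases a <;> rfl

lemma G_succ_succ (a b : ℕ) :
    G (a + 1) (b + 1) = G a (b + 1) + X ^ (2 * (a - b)) * G a b := rfl

lemma G_eq_zero : ∀ {a b : ℕ}, a < b → G a b = 0 := by
  intro a
  induction a with
  | zero => intro b hb; match b, hb with | b + 1, _ => rfl
  | succ a ih =>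
    intro b hb
    match b, hb with
    | b + 1, hb =>
      rw [G_succ_succ, ih (by omega), ih (by omega), mul_zero, add_zero]

@[simp] lemma G_diag (a : ℕ) : G a a = 1 := by
  induction a with
  | zero => rfl
  | succ a ih =>
    rw [G_succ_succ, G_eq_zero (by omega), ih, Nat.sub_self, mul_zero, pow_zero,
      one_mul, zero_add]

@[simp] lemma E_zero : E 0 = 1 := by simp [E]

lemma E_succ (n : ℕ) : E (n + 1) = E n * (1 - X ^ (2 * n + 2)) := by
  rw [E, prod_range_succ]; rfl

@[simp] lemma constantCoeff_E (n : ℕ) : constantCoeff (E n) = 1 := by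
  induction n with
  | zero => simp
  | succ n ih =>
    rw [E_succ, map_mul, ih, one_mul, map_sub, map_one, map_pow, constantCoeff_X,
      zero_pow (by omega), sub_zero]

lemma E_ne_zero (n : ℕ) : E n ≠ 0 := by
  intro h
  have := constantCoeff_E n
  rw [h, map_zero] at this
  exact one_ne_zero this.symm

lemma AO_succ (n : ℕ) : AO (n + 1) = AO n * (1 - X ^ (2 * n + 1)) := by
  simp only [AO, prod_range_succ]

/-- Product formula for the Gaussian binomials: `E b * E (a - b) * G a b = E a`. -/
lemma G_prod : ∀ (a b : ℕ), b ≤ a → E b * E (a - b) * G a b = E a := by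
  intro a
  induction a with
  | zero =>
    intro b hb
    interval_cases b
    simp
  | succ a ih =>
    intro b hb
    match b with
    | 0 => simp
    | c + 1 =>
      rcases Nat.lt_or_ge c a with hc | hc
      · -- c + 1 ≤ a
        set d := a - (c + 1) with hd
        have h1 : a + 1 - (c + 1) = d + 1 := by omega
        have had : a - c = d + 1 := by omega
        rw [G_succ_succ, h1, E_succ d, had]
        have hexp : 2 * (d + 1) = 2 * d + 2 := by ring
        rw [hexp]
        have ih1 : E (c + 1) * E d * G a (c + 1) = E a := by
          rw [hd]; exact ih (c + 1) (by omega)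
        have ih0 : E c * (E d * (1 - X ^ (2 * d + 2))) * G a c = E a := by
          have := ih c (by omega)
          rw [had, E_succ d] at this
          exact this
        have key : E (c + 1) * (E d * (1 - X ^ (2 * d + 2))) *
            (G a (c + 1) + X ^ (2 * d + 2) * G a c) =
            (1 - X ^ (2 * d + 2)) * (E (c + 1) * E d * G a (c + 1)) +
            (X ^ (2 * d + 2) * (1 - X ^ (2 * c + 2))) *
              (E c * (E d * (1 - X ^ (2 * d + 2))) * G a c) := by
          rw [E_succ c]
          ring
        rw [key, ih1, ih0]
        have hx : X ^ (2 * d + 2) * X ^ (2 * c + 2) = (X : PS) ^ (2 * a + 2) := by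
          rw [← pow_add]
          congr 1
          omega
        calc (1 - X ^ (2 * d + 2)) * E a + X ^ (2 * d + 2) * (1 - X ^ (2 * c + 2)) * E a
            = E a * (1 - X ^ (2 * d + 2) * X ^ (2 * c + 2)) := by ring
          _ = E a * (1 - X ^ (2 * a + 2)) := by rw [hx]
          _ = E (a + 1) := (E_succ a).symm
      · -- c = a
        have : c = a := by omega
        subst this
        simp [Nat.sub_self]

lemma G_symm {a b : ℕ} (hb : b ≤ a) : G a b = G a (a - b) := by
  have h1 := G_prod a b hb
  have h2 := G_prod a (a - b) (Nat.sub_le a b)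
  rw [Nat.sub_sub_self hb] at h2
  have h2' : E b * E (a - b) * G a (a - b) = E a := by
    rw [← h2]; ring
  have := h1.trans h2'.symm
  exact mul_left_cancel₀ (mul_ne_zero (E_ne_zero b) (E_ne_zero (a - b))) this

/-- Finite Gauss binomial theorem, specialized at `z = -1`. -/
lemma GBT : ∀ L : ℕ, AO L = ∑ j ∈ range (L + 1), (-1 : PS) ^ j * X ^ (j ^ 2) * G L j := by
  intro L
  induction L with
  | zero => simp [AO]
  | succ L ih =>
    rw [AO_succ, ih]
    rw [Finset.sum_range_succ' (fun j => (-1 : PS) ^ j * X ^ (j ^ 2) * G (L + 1) j)]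
    have h0 : (-1 : PS) ^ 0 * X ^ (0 ^ 2) * G (L + 1) 0 = 1 := by simp
    rw [h0]
    have hsplit : ∀ i ∈ range (L + 1),
        (-1 : PS) ^ (i + 1) * X ^ ((i + 1) ^ 2) * G (L + 1) (i + 1) =
        (-1) ^ (i + 1) * X ^ ((i + 1) ^ 2) * G L (i + 1)
          - X ^ (2 * L + 1) * ((-1) ^ i * X ^ (i ^ 2) * G L i) := by
      intro i hi
      have hiL : i ≤ L := by simpa using Nat.lt_succ_iff.mp (mem_range.mp hi)
      rw [G_succ_succ]
      have hx : X ^ ((i + 1) ^ 2) * X ^ (2 * (L - i)) = (X:PS) ^ (2 * L + 1) * X ^ (i ^ 2) := by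
        rw [← pow_add, ← pow_add]
        congr 1
        have : (i + 1) ^ 2 = i ^ 2 + 2 * i + 1 := by ring
        omega
      have : (-1 : PS) ^ (i + 1) = -(-1 : PS) ^ i := by rw [pow_succ]; ring
      rw [this]
      calc -(-1:PS) ^ i * X ^ ((i + 1) ^ 2) * (G L (i + 1) + X ^ (2 * (L - i)) * G L i)
          = -(-1:PS) ^ i * X ^ ((i + 1) ^ 2) * G L (i + 1)
            - (X ^ ((i + 1) ^ 2) * X ^ (2 * (L - i))) * ((-1) ^ i * G L i) := by ring
        _ = _ := by rw [hx]; ring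
    rw [Finset.sum_congr rfl hsplit, Finset.sum_sub_distrib]
    have hA : ∑ x ∈ range (L + 1), X ^ (2 * L + 1) * ((-1:PS) ^ x * X ^ (x ^ 2) * G L x) =
        X ^ (2 * L + 1) * ∑ x ∈ range (L + 1), (-1:PS) ^ x * X ^ (x ^ 2) * G L x :=
      (Finset.mul_sum _ _ _).symm
    have hfirst : (∑ i ∈ range (L + 1), (-1:PS) ^ (i + 1) * X ^ ((i + 1) ^ 2) * G L (i + 1)) + 1 =
        ∑ j ∈ range (L + 2), (-1:PS) ^ j * X ^ (j ^ 2) * G L j := by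
      rw [Finset.sum_range_succ' (fun j => (-1 : PS) ^ j * X ^ (j ^ 2) * G L j)]
      simp
    have hlast : ∑ j ∈ range (L + 2), (-1:PS) ^ j * X ^ (j ^ 2) * G L j =
        ∑ j ∈ range (L + 1), (-1:PS) ^ j * X ^ (j ^ 2) * G L j := by
      rw [Finset.sum_range_succ, G_eq_zero (by omega), mul_zero, add_zero]
    have h3 : ∑ x ∈ range (L + 1), (-1:PS) ^ (x + 1) * X ^ ((x + 1) ^ 2) * G L (x + 1) =
        (∑ j ∈ range (L + 1), (-1:PS) ^ j * X ^ (j ^ 2) * G L j) - 1 :=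
      eq_sub_of_add_eq (hfirst.trans hlast)
    rw [hA, h3]
    ring
/-- q-Vandermonde identity. -/
lemma VD : ∀ (n m r : ℕ), G (m + n) r =
    ∑ p ∈ Finset.HasAntidiagonal.antidiagonal r, X ^ (2 * (p.2 * (m - p.1))) * G m p.1 * G n p.2 := by
  intro n
  induction n with
  | zero =>
    intro m r
    rw [Finset.sum_eq_single (r, 0)]
    · simp
    · rintro ⟨u, k⟩ hmem hne
      have huk := Finset.HasAntidiagonal.mem_antidiagonal.mp hmem
      have hk : 0 < k := by
        cases k with
        | zero =>
          exfalso
          apply hne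
          simp only [add_zero] at huk
          subst huk
          rfl
        | succ k' => omega
      have hz : G 0 (u, k).2 = 0 := G_eq_zero hk
      rw [hz, mul_zero]
    · intro h
      exact absurd (Finset.HasAntidiagonal.mem_antidiagonal.mpr (by simp)) h
  | succ n ih =>
    intro m r
    match r with
    | 0 =>
      rw [Finset.Nat.antidiagonal_zero, Finset.sum_singleton]
      simp
    | r + 1 =>
      have hLHS : G (m + (n + 1)) (r + 1) =
          G (m + n) (r + 1) + X ^ (2 * ((m + n) - r)) * G (m + n) r := by
        rw [show m + (n + 1) = (m + n) + 1 by ring, G_succ_succ]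
      rw [hLHS, Finset.Nat.sum_antidiagonal_succ'
        (f := fun p => X ^ (2 * (p.2 * (m - p.1))) * G m p.1 * G (n + 1) p.2)]
      have hterm : ∀ p ∈ Finset.HasAntidiagonal.antidiagonal r,
          X ^ (2 * ((p.2 + 1) * (m - p.1))) * G m p.1 * G (n + 1) (p.2 + 1) =
          X ^ (2 * ((p.2 + 1) * (m - p.1))) * G m p.1 * G n (p.2 + 1)
          + X ^ (2 * ((m + n) - r)) *
              (X ^ (2 * (p.2 * (m - p.1))) * G m p.1 * G n p.2) := by
        rintro ⟨u, k⟩ hmem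
        have huk : u + k = r := Finset.HasAntidiagonal.mem_antidiagonal.mp hmem
        rw [G_succ_succ]
        rw [mul_add]
        congr 1
        rcases le_or_gt u m with hu | hu
        · rcases le_or_gt k n with hk | hk
          · have hx : X ^ (2 * ((k + 1) * (m - u))) * X ^ (2 * (n - k)) =
                (X:PS) ^ (2 * ((m + n) - r)) * X ^ (2 * (k * (m - u))) := by
              rw [← pow_add, ← pow_add]
              congr 1
              have h1 : (k + 1) * (m - u) = k * (m - u) + (m - u) := by ring
              omega
            calc X ^ (2 * ((k + 1) * (m - u))) * G m u * (X ^ (2 * (n - k)) * G n k)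
                = (X ^ (2 * ((k + 1) * (m - u))) * X ^ (2 * (n - k))) * (G m u * G n k) := by
                  ring
              _ = (X ^ (2 * ((m + n) - r)) * X ^ (2 * (k * (m - u)))) * (G m u * G n k) := by
                  rw [hx]
              _ = X ^ (2 * ((m + n) - r)) * (X ^ (2 * (k * (m - u))) * G m u * G n k) := by
                  ring
          · rw [G_eq_zero hk]
            ring
        · rw [G_eq_zero hu]
          ring
      rw [Finset.sum_congr rfl hterm, Finset.sum_add_distrib, ← Finset.mul_sum, ← ih]
      have hS1 : ∑ p ∈ Finset.HasAntidiagonal.antidiagonal r,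
          X ^ (2 * ((p.2 + 1) * (m - p.1))) * G m p.1 * G n (p.2 + 1) =
          G (m + n) (r + 1) - X ^ (2 * (0 * (m - (r+1)))) * G m (r + 1) * G n 0 := by
        rw [eq_sub_iff_add_eq, add_comm]
        rw [ih m (r + 1), Finset.Nat.sum_antidiagonal_succ'
          (f := fun p => X ^ (2 * (p.2 * (m - p.1))) * G m p.1 * G n p.2)]
      rw [hS1]
      simp only [Nat.zero_eq, mul_zero, zero_mul, pow_zero, one_mul, G_zero_right, mul_one]
      ring

/-- The key collapse: diagonal sums of products of Gaussian binomials. -/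
lemma VDD (L d : ℕ) (hd : d ≤ L) :
    ∑ k ∈ range (L - d + 1), X ^ (2 * (k * (k + d))) * G L (k + d) * G L k
      = G (2 * L) (L + d) := by
  have h := VD L L (L - d)
  rw [Finset.Nat.sum_antidiagonal_eq_sum_range_succ_mk] at h
  have hre := Finset.sum_range_reflect
    (fun k => X ^ (2 * ((L - d - k) * (L - k))) * G L k * G L (L - d - k)) (L - d + 1)
  have hterm : ∀ j ∈ range (L - d + 1),
      (fun k => X ^ (2 * ((L - d - k) * (L - k))) * G L k * G L (L - d - k))
        (L - d + 1 - 1 - j) =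
      X ^ (2 * (j * (j + d))) * G L (j + d) * G L j := by
    intro j hj
    have hjL : j ≤ L - d := by
      have := mem_range.mp hj
      omega
    have h1 : L - d + 1 - 1 - j = L - d - j := by omega
    rw [h1]
    show X ^ (2 * ((L - d - (L - d - j)) * (L - (L - d - j)))) * G L (L - d - j) *
        G L (L - d - (L - d - j)) =
      X ^ (2 * (j * (j + d))) * G L (j + d) * G L j
    rw [show L - d - (L - d - j) = j from by omega,
      show L - (L - d - j) = j + d from by omega]
    have h4 : G L (L - d - j) = G L (j + d) := by
      have h5 := G_symm (show j + d ≤ L by omega)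
      rw [show L - (j + d) = L - d - j from by omega] at h5
      exact h5.symm
    rw [h4]
  rw [Finset.sum_congr rfl hterm] at hre
  have h' : G (L + L) (L - d) =
      ∑ k ∈ range (L - d + 1), X ^ (2 * ((L - d - k) * (L - k))) * G L k * G L (L - d - k) :=
    h
  have h6 := G_symm (show L - d ≤ L + L by omega)
  rw [show L + L - (L - d) = L + d from by omega] at h6
  rw [hre, ← h', h6, show 2 * L = L + L from by ring]

lemma half_le {β : Type*} [AddCommMonoid β] (n : ℕ) (F : ℕ → ℕ → β) :
    ∑ p ∈ (range n ×ˢ range n).filter (fun p => p.2 ≤ p.1), F p.1 p.2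
      = ∑ d ∈ range n, ∑ k ∈ range (n - d), F (k + d) k := by
  rw [← Finset.sum_sigma (range n) (fun d => range (n - d)) (fun x => F (x.2 + x.1) x.2)]
  apply Finset.sum_nbij' (i := fun p => (⟨p.1 - p.2, p.2⟩ : Σ _ : ℕ, ℕ))
    (j := fun x => (x.2 + x.1, x.2))
  · intro p hp
    simp only [Finset.mem_filter, Finset.mem_product, Finset.mem_range] at hp
    simp only [Finset.mem_sigma, Finset.mem_range]
    omega
  · intro x hx
    simp only [Finset.mem_sigma, Finset.mem_range] at hx
    simp only [Finset.mem_filter, Finset.mem_product, Finset.mem_range]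
    omega
  · intro p hp
    simp only [Finset.mem_filter, Finset.mem_product, Finset.mem_range] at hp
    have : p.2 + (p.1 - p.2) = p.1 := by omega
    simp [this]
  · intro x hx
    simp only [Finset.mem_sigma, Finset.mem_range] at hx
    simp only
    congr 1
    omega
  · intro p hp
    simp only [Finset.mem_filter, Finset.mem_product, Finset.mem_range] at hp
    have : p.2 + (p.1 - p.2) = p.1 := by omega
    simp [this]

lemma half_gt {β : Type*} [AddCommMonoid β] (n : ℕ) (F : ℕ → ℕ → β) :
    ∑ p ∈ (range n ×ˢ range n).filter (fun p => ¬ p.2 ≤ p.1), F p.1 p.2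
      = ∑ d ∈ Ico 1 n, ∑ k ∈ range (n - d), F k (k + d) := by
  rw [← Finset.sum_sigma (Ico 1 n) (fun d => range (n - d)) (fun x => F x.2 (x.2 + x.1))]
  apply Finset.sum_nbij' (i := fun p => (⟨p.2 - p.1, p.1⟩ : Σ _ : ℕ, ℕ))
    (j := fun x => (x.2, x.2 + x.1))
  · intro p hp
    simp only [Finset.mem_filter, Finset.mem_product, Finset.mem_range] at hp
    simp only [Finset.mem_sigma, Finset.mem_range, Finset.mem_Ico]
    omega
  · intro x hx
    simp only [Finset.mem_sigma, Finset.mem_range, Finset.mem_Ico] at hx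
    simp only [Finset.mem_filter, Finset.mem_product, Finset.mem_range]
    omega
  · intro p hp
    simp only [Finset.mem_filter, Finset.mem_product, Finset.mem_range] at hp
    have : p.1 + (p.2 - p.1) = p.2 := by omega
    simp [this]
  · intro x hx
    simp only [Finset.mem_sigma, Finset.mem_range, Finset.mem_Ico] at hx
    simp only
    congr 1
    omega
  · intro p hp
    simp only [Finset.mem_filter, Finset.mem_product, Finset.mem_range] at hp
    have : p.1 + (p.2 - p.1) = p.2 := by omega
    simp [this]

lemma sq_regroup {β : Type*} [CommRing β] (n : ℕ) (f : ℕ → β) :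
    (∑ j ∈ range n, f j) ^ 2 =
      (∑ d ∈ range n, ∑ k ∈ range (n - d), f (k + d) * f k)
      + ∑ d ∈ Ico 1 n, ∑ k ∈ range (n - d), f (k + d) * f k := by
  rw [sq, Finset.sum_mul_sum, ← Finset.sum_product']
  rw [← Finset.sum_filter_add_sum_filter_not (range n ×ˢ range n) (fun p => p.2 ≤ p.1)
    (fun p => f p.1 * f p.2)]
  congr 1
  · exact half_le n (fun a b => f a * f b)
  · rw [half_gt n (fun a b => f a * f b)]
    apply Finset.sum_congr rfl
    intro d _
    apply Finset.sum_congr rfl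
    intro k _
    exact mul_comm _ _

/-- The square of `AO L` in terms of Gaussian binomials. -/
lemma AO_sq (L : ℕ) :
    (AO L) ^ 2 =
      (∑ d ∈ range (L + 1), (-1 : PS) ^ d * X ^ (d ^ 2) * G (2 * L) (L + d))
      + ∑ d ∈ Ico 1 (L + 1), (-1 : PS) ^ d * X ^ (d ^ 2) * G (2 * L) (L + d) := by
  rw [GBT, sq_regroup]
  have inner : ∀ d, d ≤ L →
      ∑ k ∈ range (L + 1 - d),
        ((-1 : PS) ^ (k + d) * X ^ ((k + d) ^ 2) * G L (k + d)) *
          ((-1 : PS) ^ k * X ^ (k ^ 2) * G L k)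
      = (-1 : PS) ^ d * X ^ (d ^ 2) * G (2 * L) (L + d) := by
    intro d hd
    have hr : L + 1 - d = L - d + 1 := by omega
    rw [hr, ← VDD L d hd, Finset.mul_sum]
    apply Finset.sum_congr rfl
    intro k hk
    have hsgn : (-1 : PS) ^ (k + d) * (-1 : PS) ^ k = (-1 : PS) ^ d := by
      rw [← pow_add]
      have h2 : k + d + k = d + 2 * k := by ring
      rw [h2, pow_add, pow_mul]
      simp [mul_comm]
    have hxp : (X : PS) ^ ((k + d) ^ 2) * X ^ (k ^ 2) = X ^ (d ^ 2) * X ^ (2 * (k * (k + d))) := by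
      rw [← pow_add, ← pow_add]
      congr 1
      ring
    calc ((-1 : PS) ^ (k + d) * X ^ ((k + d) ^ 2) * G L (k + d)) *
          ((-1 : PS) ^ k * X ^ (k ^ 2) * G L k)
        = ((-1 : PS) ^ (k + d) * (-1 : PS) ^ k) * ((X:PS) ^ ((k + d) ^ 2) * X ^ (k ^ 2)) *
            (G L (k + d) * G L k) := by ring
      _ = (-1 : PS) ^ d * (X ^ (d ^ 2) * X ^ (2 * (k * (k + d)))) * (G L (k + d) * G L k) := by
          rw [hsgn, hxp]
      _ = (-1 : PS) ^ d * X ^ (d ^ 2) * (X ^ (2 * (k * (k + d))) * G L (k + d) * G L k) := by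
          ring
  congr 1
  · apply Finset.sum_congr rfl
    intro d hd
    exact inner d (by have := mem_range.mp hd; omega)
  · apply Finset.sum_congr rfl
    intro d hd
    exact inner d (by have := Finset.mem_Ico.mp hd; omega)

/-! ### Congruences modulo powers of `X` -/

def MEq (s : ℕ) (f g : PS) : Prop := X ^ s ∣ f - g

lemma MEq.refl (s : ℕ) (f : PS) : MEq s f f := by simp [MEq]

lemma MEq.mul {s : ℕ} {f g f' g' : PS} (h : MEq s f g) (h' : MEq s f' g') :
    MEq s (f * f') (g * g') := by
  have hkey : f * f' - g * g' = f * (f' - g') + (f - g) * g' := by ring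
  rw [MEq, hkey]
  exact dvd_add (Dvd.dvd.mul_left h' f) (Dvd.dvd.mul_right h g')

lemma MEq.add {s : ℕ} {f g f' g' : PS} (h : MEq s f g) (h' : MEq s f' g') :
    MEq s (f + f') (g + g') := by
  have hkey : f + f' - (g + g') = (f - g) + (f' - g') := by ring
  rw [MEq, hkey]
  exact dvd_add h h'

lemma MEq.sum {s : ℕ} {γ : Type*} (t : Finset γ) (f g : γ → PS)
    (h : ∀ i ∈ t, MEq s (f i) (g i)) :
    MEq s (∑ i ∈ t, f i) (∑ i ∈ t, g i) := by
  rw [MEq, ← Finset.sum_sub_distrib]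
  exact Finset.dvd_sum h

lemma MEq.mono {s t : ℕ} (hst : s ≤ t) {f g : PS} (h : MEq t f g) : MEq s f g :=
  dvd_trans (pow_dvd_pow X hst) h

lemma MEq.mul_pow {s : ℕ} (e : ℕ) {f g : PS} (h : MEq s f g) :
    MEq (e + s) (X ^ e * f) (X ^ e * g) := by
  rw [MEq, ← mul_sub, pow_add]
  exact mul_dvd_mul dvd_rfl h

lemma coeff_eq_of_MEq {s : ℕ} {f g : PS} (h : MEq s f g) {i : ℕ} (hi : i < s) :
    coeff i f = coeff i g := by
  have hd := PowerSeries.X_pow_dvd_iff.mp h i hi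
  rw [map_sub, sub_eq_zero] at hd
  exact hd

lemma MEq_one_sub (e s : ℕ) (hse : s ≤ e) : MEq s (1 - X ^ e) 1 := by
  rw [MEq, show (1 - X ^ e) - 1 = -(X ^ e : PS) from by ring]
  exact dvd_neg.mpr (pow_dvd_pow X hse)

lemma MEq_prod_one {γ : Type*} [DecidableEq γ] (t : Finset γ) (e : γ → ℕ) (s : ℕ)
    (h : ∀ i ∈ t, s ≤ e i) :
    MEq s (∏ i ∈ t, (1 - X ^ (e i))) 1 := by
  induction t using Finset.induction_on with
  | empty => simpa using MEq.refl s 1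
  | @insert a t ha ih =>
    rw [Finset.prod_insert ha]
    have h1 := MEq_one_sub (e a) s (h a (Finset.mem_insert_self a t))
    have h2 := ih (fun i hi => h i (Finset.mem_insert_of_mem hi))
    simpa using h1.mul h2

/-! ### Stabilization of Gaussian binomials -/

lemma E_split {a b : ℕ} (h : b ≤ a) :
    E a = E b * ∏ k ∈ Ico b a, (1 - X ^ (2 * k + 2)) := by
  rw [E, E, Finset.range_eq_Ico, ← Finset.prod_Ico_consecutive _ (Nat.zero_le b) h, Finset.range_eq_Ico]

lemma E_G_eq (L d : ℕ) (hd : d ≤ L) :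
    E (2 * L) * G (2 * L) (L + d) =
      (∏ k ∈ Ico (L + d) (2 * L), (1 - X ^ (2 * k + 2))) *
        ∏ k ∈ Ico (L - d) (2 * L), (1 - X ^ (2 * k + 2)) := by
  set W1 := ∏ k ∈ Ico (L + d) (2 * L), ((1 : PS) - X ^ (2 * k + 2)) with hW1
  set W2 := ∏ k ∈ Ico (L - d) (2 * L), ((1 : PS) - X ^ (2 * k + 2)) with hW2
  have hp := G_prod (2 * L) (L + d) (by omega)
  rw [show 2 * L - (L + d) = L - d from by omega] at hp
  have h1 : E (2 * L) = E (L + d) * W1 := E_split (by omega)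
  have h2 : E (2 * L) = E (L - d) * W2 := E_split (by omega)
  apply mul_left_cancel₀ (E_ne_zero (2 * L))
  calc E (2 * L) * (E (2 * L) * G (2 * L) (L + d))
      = (E (L + d) * W1) * ((E (L - d) * W2) * G (2 * L) (L + d)) := by rw [← h1, ← h2]
    _ = (W1 * W2) * (E (L + d) * E (L - d) * G (2 * L) (L + d)) := by ring
    _ = (W1 * W2) * E (2 * L) := by rw [hp]
    _ = E (2 * L) * (W1 * W2) := by ring

lemma E_G_MEq (L d : ℕ) (hd : d ≤ L) :
    MEq (2 * (L - d) + 2) (E (2 * L) * G (2 * L) (L + d)) 1 := by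
  rw [E_G_eq L d hd]
  have m1 : MEq (2 * (L - d) + 2) (∏ k ∈ Ico (L + d) (2 * L), (1 - X ^ (2 * k + 2))) 1 :=
    MEq_prod_one _ _ _ (by
      intro k hk
      have := Finset.mem_Ico.mp hk
      omega)
  have m2 : MEq (2 * (L - d) + 2) (∏ k ∈ Ico (L - d) (2 * L), (1 - X ^ (2 * k + 2))) 1 :=
    MEq_prod_one _ _ _ (by
      intro k hk
      have := Finset.mem_Ico.mp hk
      omega)
  simpa using m1.mul m2

/-- The theta-like series appearing as the stabilized value of `E (2L) * AO L ^ 2`. -/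
def Theta (L : ℕ) : PS :=
  (∑ d ∈ range (L + 1), (-1 : PS) ^ d * X ^ (d ^ 2))
    + ∑ d ∈ Ico 1 (L + 1), (-1 : PS) ^ d * X ^ (d ^ 2)

lemma E_AO_sq_MEq (L : ℕ) : MEq (2 * L + 1) (E (2 * L) * (AO L) ^ 2) (Theta L) := by
  rw [AO_sq, Theta, mul_add, Finset.mul_sum, Finset.mul_sum]
  have key : ∀ d, d ≤ L →
      MEq (2 * L + 1) (E (2 * L) * ((-1 : PS) ^ d * X ^ (d ^ 2) * G (2 * L) (L + d)))
        ((-1 : PS) ^ d * X ^ (d ^ 2)) := by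
    intro d hd
    have h := (E_G_MEq L d hd).mul_pow (d ^ 2)
    have h2 := (MEq.refl (d ^ 2 + (2 * (L - d) + 2)) ((-1 : PS) ^ d)).mul h
    have hmod : 2 * L + 1 ≤ d ^ 2 + (2 * (L - d) + 2) := by
      have hd2 : 2 * d ≤ d ^ 2 + 1 := by
        rcases d with _ | e
        · simp
        · have hsq : (e + 1) ^ 2 = e ^ 2 + 2 * e + 1 := by ring
          omega
      have hsq : d ^ 2 + (2 * (L - d) + 2) = d ^ 2 + 2 * L - 2 * d + 2 := by omega
      omega
    have h3 := h2.mono hmod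
    rw [show (-1 : PS) ^ d * (X ^ (d ^ 2) * (E (2 * L) * G (2 * L) (L + d)))
        = E (2 * L) * ((-1 : PS) ^ d * X ^ (d ^ 2) * G (2 * L) (L + d)) from by ring,
      show (-1 : PS) ^ d * (X ^ (d ^ 2) * 1) = (-1 : PS) ^ d * X ^ (d ^ 2) from by ring] at h3
    exact h3
  apply MEq.add
  · apply MEq.sum
    intro d hd
    exact key d (by have := mem_range.mp hd; omega)
  · apply MEq.sum
    intro d hd
    exact key d (by have := Finset.mem_Ico.mp hd; omega)

/-! ### Series supported on multiples of 3 -/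

def Sup3 (f : PS) : Prop := ∀ i : ℕ, ¬ (3 ∣ i) → coeff i f = 0

lemma Sup3_one : Sup3 1 := by
  intro i hi
  rw [coeff_one, if_neg (by omega)]

lemma Sup3_mul {f g : PS} (hf : Sup3 f) (hg : Sup3 g) : Sup3 (f * g) := by
  intro i hi
  rw [coeff_mul]
  apply Finset.sum_eq_zero
  intro p hp
  have hpi := Finset.HasAntidiagonal.mem_antidiagonal.mp hp
  by_cases h1 : 3 ∣ p.1
  · have h2 : ¬ (3 ∣ p.2) := by omega
    rw [hg p.2 h2, mul_zero]
  · rw [hf p.1 h1, zero_mul]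

lemma Sup3_one_sub_pow {e : ℕ} (he : 3 ∣ e) : Sup3 (1 - X ^ e) := by
  intro i hi
  rw [map_sub, coeff_one, coeff_X_pow, if_neg (by omega), if_neg (by rintro rfl; exact hi he),
    sub_zero]

lemma Sup3_prod {γ : Type*} [DecidableEq γ] (t : Finset γ) (f : γ → PS)
    (h : ∀ i ∈ t, Sup3 (f i)) : Sup3 (∏ i ∈ t, f i) := by
  induction t using Finset.induction_on with
  | empty => simpa using Sup3_one
  | @insert a t ha ih =>
    rw [Finset.prod_insert ha]
    exact Sup3_mul (h a (Finset.mem_insert_self a t))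
      (ih fun i hi => h i (Finset.mem_insert_of_mem hi))

lemma Sup3_inv {f g : PS} (hfg : f * g = 1) (hf : Sup3 f) : Sup3 g := by
  have hf0 : constantCoeff f ≠ 0 := by
    intro h0
    have := congrArg (constantCoeff (R := K)) hfg
    rw [map_mul, map_one, h0, zero_mul] at this
    exact zero_ne_one this
  intro i
  induction i using Nat.strong_induction_on with
  | _ i IH =>
    intro hi
    have hc : coeff i (f * g) = 0 := by
      rw [hfg, coeff_one, if_neg (by omega)]
    rw [coeff_mul] at hc
    rw [Finset.sum_eq_single (0, i)] at hc
    · rw [coeff_zero_eq_constantCoeff] at hc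
      rcases mul_eq_zero.mp hc with h | h
      · exact absurd h hf0
      · exact h
    · rintro ⟨a, b⟩ hab hne
      have hab' := Finset.HasAntidiagonal.mem_antidiagonal.mp hab
      simp only at hab'
      by_cases h1 : 3 ∣ a
      · rcases Nat.eq_zero_or_pos a with rfl | hapos
        · exfalso
          apply hne
          have : b = i := by omega
          rw [this]
        · have hb : coeff b g = 0 := IH b (by omega) (by omega)
          rw [hb, mul_zero]
      · rw [hf a h1, zero_mul]
    · intro hmem
      exact absurd (Finset.HasAntidiagonal.mem_antidiagonal.mpr (by simp)) hmem

/-! ### Frobenius: cubes in characteristic 3 -/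

lemma three_eq_zero : (3 : PS) = 0 := by
  have h := map_natCast (C (R := K)) 3
  have h3 : ((3 : ℕ) : K) = 0 := by decide
  have : ((3 : ℕ) : PS) = 0 := by rw [← h, h3, map_zero]
  simpa using this

lemma cube_one_sub (f : PS) : (1 - f) ^ 3 = 1 - f ^ 3 := by
  have h3 := three_eq_zero
  have hkey : (1 - f) ^ 3 = 1 - f ^ 3 - 3 * (f * (1 - f)) := by ring
  rw [hkey, h3]
  ring

lemma AO_cube (L : ℕ) : (AO L) ^ 3 = ∏ k ∈ range L, (1 - X ^ (3 * (2 * k + 1))) := by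
  rw [AO, ← Finset.prod_pow]
  apply Finset.prod_congr rfl
  intro k _
  rw [cube_one_sub, ← pow_mul, Nat.mul_comm (2 * k + 1) 3]

lemma E_cube (n : ℕ) : (E n) ^ 3 = ∏ k ∈ range n, (1 - X ^ (3 * (2 * k + 2))) := by
  rw [E, ← Finset.prod_pow]
  apply Finset.prod_congr rfl
  intro k _
  rw [cube_one_sub, ← pow_mul, Nat.mul_comm (2 * k + 2) 3]

lemma Sup3_AO_cube (L : ℕ) : Sup3 ((AO L) ^ 3) := by
  rw [AO_cube]
  exact Sup3_prod _ _ fun i _ => Sup3_one_sub_pow ⟨2 * i + 1, rfl⟩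

lemma Sup3_E_cube (n : ℕ) : Sup3 ((E n) ^ 3) := by
  rw [E_cube]
  exact Sup3_prod _ _ fun i _ => Sup3_one_sub_pow ⟨2 * i + 2, rfl⟩

@[simp] lemma constantCoeff_AO (n : ℕ) : constantCoeff (AO n) = 1 := by
  induction n with
  | zero => simp [AO]
  | succ n ih =>
    rw [AO_succ, map_mul, ih, one_mul, map_sub, map_one, map_pow, constantCoeff_X,
      zero_pow (by omega), sub_zero]

lemma AO_ne_zero (n : ℕ) : AO n ≠ 0 := by
  intro h
  have := constantCoeff_AO n
  rw [h, map_zero] at this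
  exact one_ne_zero this.symm

/-- Coefficients of `Theta` vanish in degrees `≡ 2 mod 3`. -/
lemma coeff_Theta (L a : ℕ) (ha : a % 3 = 2) : coeff a (Theta L) = 0 := by
  have hterm : ∀ d : ℕ, coeff a ((-1 : PS) ^ d * X ^ (d ^ 2)) = 0 := by
    intro d
    have hC : ((-1 : PS) ^ d) = C ((-1 : K) ^ d) := by
      rw [map_pow, map_neg, map_one]
    rw [hC, coeff_C_mul, coeff_X_pow, if_neg, mul_zero]
    intro hda
    have h1 : d ^ 2 % 3 = a % 3 := by rw [hda]
    have h2 : d % 3 = 0 ∨ d % 3 = 1 ∨ d % 3 = 2 := by omega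
    have h3 : d ^ 2 % 3 = (d % 3) ^ 2 % 3 := by
      rw [Nat.pow_mod]
    rcases h2 with h | h | h <;> rw [h] at h3 <;> simp at h3 <;> omega
  rw [Theta, map_add, map_sum, map_sum]
  rw [Finset.sum_eq_zero (fun d _ => hterm d), Finset.sum_eq_zero (fun d _ => hterm d)]
  simp

/-! ### Partition generating function machinery (adapted from
`Archive/Wiedijk100Theorems/Partition.lean`, by Bhavik Mehta and Aaron Anderson) -/

open Finset.HasAntidiagonal

section GFCopy

variable {α : Type*}

open scoped Classical

/-- A convenience constructor for the power series whose coefficients indicate a subset. -/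
def indicatorSeries (α : Type*) [Semiring α] (s : Set ℕ) : PowerSeries α :=
  PowerSeries.mk fun n => if n ∈ s then 1 else 0

theorem coeff_indicator (s : Set ℕ) [Semiring α] (n : ℕ) :
    coeff n (indicatorSeries α s) = if n ∈ s then 1 else 0 :=
  coeff_mk _ _

theorem coeff_indicator_pos (s : Set ℕ) [Semiring α] (n : ℕ) (h : n ∈ s) :
    coeff n (indicatorSeries α s) = 1 := by rw [coeff_indicator, if_pos h]

theorem coeff_indicator_neg (s : Set ℕ) [Semiring α] (n : ℕ) (h : n ∉ s) :
    coeff n (indicatorSeries α s) = 0 := by rw [coeff_indicator, if_neg h]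

theorem constantCoeff_indicator (s : Set ℕ) [Semiring α] :
    constantCoeff (indicatorSeries α s) = if 0 ∈ s then 1 else 0 :=
  rfl

theorem two_series (i : ℕ) [Semiring α] :
    1 + (X : PowerSeries α) ^ i.succ = indicatorSeries α {0, i.succ} := by
  ext n
  simp only [coeff_indicator, coeff_one, coeff_X_pow, Set.mem_insert_iff, Set.mem_singleton_iff,
    map_add]
  cases' n with d
  · simp [(Nat.succ_ne_zero i).symm]
  · simp [Nat.succ_ne_zero d]

theorem num_series' [Field α] (i : ℕ) :
    (1 - (X : PowerSeries α) ^ (i + 1))⁻¹ = indicatorSeries α {k | i + 1 ∣ k} := by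
  rw [PowerSeries.inv_eq_iff_mul_eq_one]
  · ext n
    cases n with
    | zero => simp [mul_sub, zero_pow, constantCoeff_indicator]
    | succ n =>
      simp only [coeff_one, if_false, mul_sub, mul_one, coeff_indicator,
        LinearMap.map_sub, reduceCtorEq]
      simp_rw [coeff_mul, coeff_X_pow, coeff_indicator, @boole_mul _ _ _ _]
      simp_rw [← ite_and]
      simp only [Set.mem_setOf_eq, Finset.sum_boole, sub_eq_iff_eq_add, zero_add]
      symm
      split_ifs with h
      · suffices #{a ∈ antidiagonal (n + 1) | i + 1 ∣ a.fst ∧ a.snd = i + 1} = 1 by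
          convert congr_arg ((↑) : ℕ → α) this; norm_cast
        rw [card_eq_one]
        cases' h with p hp
        refine ⟨((i + 1) * (p - 1), i + 1), ?_⟩
        ext ⟨a₁, a₂⟩
        simp only [mem_filter, Prod.mk.injEq, HasAntidiagonal.mem_antidiagonal, mem_singleton]
        constructor
        · rintro ⟨a_left, ⟨a, rfl⟩, rfl⟩
          refine ⟨?_, rfl⟩
          rw [Nat.mul_sub_left_distrib, ← hp, ← a_left, mul_one, Nat.add_sub_cancel]
        · rintro ⟨rfl, rfl⟩
          match p with
          | 0 => rw [mul_zero] at hp; cases hp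
          | p + 1 => rw [hp]; simp [mul_add]
      · suffices #{a ∈ antidiagonal (n + 1) | i + 1 ∣ a.fst ∧ a.snd = i + 1} = 0 by
          convert congr_arg ((↑) : ℕ → α) this; norm_cast
        rw [card_eq_zero]
        apply eq_empty_of_forall_notMem
        simp only [Prod.forall, mem_filter, not_and, HasAntidiagonal.mem_antidiagonal]
        rintro _ h₁ h₂ ⟨a, rfl⟩ rfl
        apply h
        simp [← h₂]
  · simp [zero_pow]


-- The main workhorse of the partition theorem proof.
theorem partialGF_prop (α : Type*) [CommSemiring α] (n : ℕ) (s : Finset ℕ) (hs : ∀ i ∈ s, 0 < i)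
    (c : ℕ → Set ℕ) (hc : ∀ i, i ∉ s → 0 ∈ c i) :
    #{p : n.Partition | (∀ j, p.parts.count j ∈ c j) ∧ ∀ j ∈ p.parts, j ∈ s} =
      coeff n (∏ i ∈ s, indicatorSeries α ((· * i) '' c i)) := by
  simp_rw [coeff_prod, coeff_indicator, prod_boole, sum_boole]
  apply congr_arg
  simp only [mem_univ, forall_true_left, not_and, not_forall, exists_prop,
    Set.mem_image, not_exists]
  set φ : (a : Nat.Partition n) →
    a ∈ filter (fun p ↦ (∀ (j : ℕ), Multiset.count j p.parts ∈ c j) ∧ ∀ j ∈ p.parts, j ∈ s) univ →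
    ℕ →₀ ℕ := fun p _ => {
      toFun := fun i => Multiset.count i p.parts • i
      support := Finset.filter (fun i => i ≠ 0) p.parts.toFinset
      mem_support_toFun := fun a => by
        simp only [smul_eq_mul, ne_eq, mul_eq_zero, Multiset.count_eq_zero]
        rw [not_or, not_not]
        simp only [Multiset.mem_toFinset, not_not, mem_filter] }
  refine Finset.card_bij φ ?_ ?_ ?_
  · intro a ha
    simp only [φ, not_forall, not_exists, not_and, exists_prop, mem_filter]
    rw [mem_finsuppAntidiag]
    dsimp only [ne_eq, smul_eq_mul, id_eq, eq_mpr_eq_cast, le_eq_subset, Finsupp.coe_mk]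
    simp only [mem_univ, forall_true_left, not_and, not_forall, exists_prop,
      mem_filter, true_and] at ha
    refine ⟨⟨?_, fun i ↦ ?_⟩, fun i _ ↦ ⟨a.parts.count i, ha.1 i, rfl⟩⟩
    · conv_rhs => simp [← a.parts_sum]
      rw [sum_multiset_count_of_subset _ s]
      · simp only [smul_eq_mul]
      · intro i
        simp only [Multiset.mem_toFinset, not_not, mem_filter]
        apply ha.2
    · simp only [ne_eq, Multiset.mem_toFinset, not_not, mem_filter, and_imp]
      exact fun hi _ ↦ ha.2 i hi
  · intro p₁ hp₁ p₂ hp₂ h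
    apply Nat.Partition.ext
    simp only [true_and, mem_univ, mem_filter] at hp₁ hp₂
    ext i
    simp only [φ, ne_eq, Multiset.mem_toFinset, not_not, smul_eq_mul, Finsupp.mk.injEq] at h
    by_cases hi : i = 0
    · rw [hi]
      rw [Multiset.count_eq_zero_of_notMem]
      · rw [Multiset.count_eq_zero_of_notMem]
        intro a; exact Nat.lt_irrefl 0 (hs 0 (hp₂.2 0 a))
      intro a; exact Nat.lt_irrefl 0 (hs 0 (hp₁.2 0 a))
    · rw [← mul_left_inj' hi]
      rw [funext_iff] at h
      exact h.2 i
  · simp only [φ, mem_filter, mem_finsuppAntidiag, mem_univ, exists_prop, true_and, and_assoc]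
    rintro f ⟨hf, hf₃, hf₄⟩
    have hf' : f ∈ finsuppAntidiag s n := mem_finsuppAntidiag.mpr ⟨hf, hf₃⟩
    simp only [mem_finsuppAntidiag] at hf'
    refine ⟨⟨∑ i ∈ s, Multiset.replicate (f i / i) i, ?_, ?_⟩, ?_, ?_, ?_⟩
    · intro i hi
      simp only [exists_prop, Multiset.mem_sum, mem_map, Function.Embedding.coeFn_mk] at hi
      rcases hi with ⟨t, ht, z⟩
      apply hs
      rwa [Multiset.eq_of_mem_replicate z]
    · simp_rw [Multiset.sum_sum, Multiset.sum_replicate, Nat.nsmul_eq_mul]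
      rw [← hf'.1]
      refine sum_congr rfl fun i hi => Nat.div_mul_cancel ?_
      rcases hf₄ i hi with ⟨w, _, hw₂⟩
      rw [← hw₂]
      exact dvd_mul_left _ _
    · intro i
      simp_rw [Multiset.count_sum', Multiset.count_replicate, sum_ite_eq']
      split_ifs with h
      · rcases hf₄ i h with ⟨w, hw₁, hw₂⟩
        rwa [← hw₂, Nat.mul_div_cancel _ (hs i h)]
      · exact hc _ h
    · intro i hi
      rw [Multiset.mem_sum] at hi
      rcases hi with ⟨j, hj₁, hj₂⟩
      rwa [Multiset.eq_of_mem_replicate hj₂]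
    · ext i
      simp_rw [Multiset.count_sum', Multiset.count_replicate, sum_ite_eq']
      simp only [ne_eq, Multiset.mem_toFinset, not_not, smul_eq_mul, ite_mul,
        zero_mul, Finsupp.coe_mk]
      split_ifs with h
      · apply Nat.div_mul_cancel
        rcases hf₄ i h with ⟨w, _, hw₂⟩
        apply Dvd.intro_left _ hw₂
      · apply symm
        rw [← Finsupp.notMem_support_iff]
        exact notMem_mono hf'.2 h


lemma mem_parts_le {j : ℕ} (p : Nat.Partition j) {t : ℕ} (ht : t ∈ p.parts) : t ≤ j := by
  simpa [p.parts_sum] using Multiset.single_le_sum (fun _ _ => Nat.zero_le _) _ ht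

end GFCopy

open scoped Classical

lemma coeff_P (N j : ℕ) (hj : j ≤ N) :
    (coeff j) (∏ i ∈ range N, indicatorSeries K {n : ℕ | (i + 1) ∣ n}) =
      (Fintype.card (Nat.Partition j) : K) := by
  have h := partialGF_prop K j ((range N).map ⟨Nat.succ, Nat.succ_injective⟩)
    (by
      intro i hi
      simp only [Finset.mem_map, Function.Embedding.coeFn_mk] at hi
      obtain ⟨a, -, rfl⟩ := hi
      exact Nat.succ_pos a)
    (fun _ => Set.univ) (fun _ _ => trivial)
  rw [Finset.prod_map] at h
  have hset : ∀ i ∈ range N, indicatorSeries K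
      ((· * ((⟨Nat.succ, Nat.succ_injective⟩ : ℕ ↪ ℕ) i)) '' Set.univ) =
      indicatorSeries K {n : ℕ | (i + 1) ∣ n} := by
    intro i _
    apply congrArg
    ext n
    simp only [Set.mem_image, Set.mem_univ, true_and, Set.mem_setOf_eq,
      Function.Embedding.coeFn_mk, Nat.succ_eq_add_one]
    constructor
    · rintro ⟨a, rfl⟩
      exact Dvd.intro_left a rfl
    · rintro ⟨a, rfl⟩
      exact ⟨a, mul_comm _ _⟩
  rw [Finset.prod_congr rfl hset] at h
  rw [← h]
  congr 1
  rw [← Finset.card_univ]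
  congr 1
  rw [Finset.filter_true_of_mem]
  intro p _
  refine ⟨fun _ => trivial, fun t ht => ?_⟩
  simp only [Finset.mem_map, Finset.mem_range, Function.Embedding.coeFn_mk]
  have h1 : 0 < t := p.parts_pos ht
  have h2 : t ≤ j := mem_parts_le p ht
  exact ⟨t - 1, by omega, by omega⟩

lemma coeff_Q (N j : ℕ) (hj : j ≤ N) :
    (coeff j) (∏ i ∈ range N, indicatorSeries K {n : ℕ | (2 * i + 2) ∣ n}) =
      (Fintype.card {μ : Nat.Partition j // ∀ t ∈ μ.parts, Even t} : K) := by
  have hemb : Function.Injective (fun i : ℕ => 2 * i + 2) := by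
    intro a b hab
    simp only at hab
    omega
  have h := partialGF_prop K j ((range N).map ⟨fun i => 2 * i + 2, hemb⟩)
    (by
      intro i hi
      simp only [Finset.mem_map, Function.Embedding.coeFn_mk] at hi
      obtain ⟨a, -, rfl⟩ := hi
      omega)
    (fun _ => Set.univ) (fun _ _ => trivial)
  rw [Finset.prod_map] at h
  have hset : ∀ i ∈ range N, indicatorSeries K
      ((· * ((⟨fun i => 2 * i + 2, hemb⟩ : ℕ ↪ ℕ) i)) '' Set.univ) =
      indicatorSeries K {n : ℕ | (2 * i + 2) ∣ n} := by
    intro i _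
    apply congrArg
    ext n
    simp only [Set.mem_image, Set.mem_univ, true_and, Set.mem_setOf_eq,
      Function.Embedding.coeFn_mk]
    constructor
    · rintro ⟨a, rfl⟩
      exact Dvd.intro_left a rfl
    · rintro ⟨a, rfl⟩
      exact ⟨a, mul_comm _ _⟩
  rw [Finset.prod_congr rfl hset] at h
  rw [← h]
  congr 1
  rw [Fintype.card_subtype]
  congr 1
  apply Finset.filter_congr
  intro p _
  simp only [Finset.mem_map, Finset.mem_range, Function.Embedding.coeFn_mk]
  constructor
  · rintro ⟨-, h2⟩ t ht
    obtain ⟨a, -, rfl⟩ := h2 t ht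
    exact ⟨a + 1, by omega⟩
  · intro hev
    refine ⟨fun _ => trivial, fun t ht => ?_⟩
    have h1 : 0 < t := p.parts_pos ht
    have h2 : t ≤ j := mem_parts_le p ht
    obtain ⟨c, hc⟩ := hev t ht
    exact ⟨c - 1, by omega, by omega⟩

lemma constantCoeff_one_sub_X_pow (e : ℕ) (he : 0 < e) :
    constantCoeff (R := K) (1 - X ^ e) = 1 := by
  rw [map_sub, map_one, map_pow, constantCoeff_X, zero_pow (by omega), sub_zero]

lemma one_sub_mul_indicator (e : ℕ) (he : 0 < e) :
    ((1 : PS) - X ^ e) * indicatorSeries K {n : ℕ | e ∣ n} = 1 := by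
  obtain ⟨f, rfl⟩ : ∃ f, e = f + 1 := ⟨e - 1, by omega⟩
  rw [← num_series' f]
  exact PowerSeries.mul_inv_cancel _
    (by rw [constantCoeff_one_sub_X_pow (f + 1) (by omega)]; exact one_ne_zero)

lemma A_split (L : ℕ) : ∏ i ∈ range (2 * L), ((1 : PS) - X ^ (i + 1)) = AO L * E L := by
  induction L with
  | zero => simp [AO, E]
  | succ L ih =>
    rw [show 2 * (L + 1) = (2 * L + 1) + 1 from by ring, prod_range_succ, prod_range_succ, ih,
      AO_succ, E_succ, show 2 * L + 1 + 1 = 2 * L + 2 from by ring]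
    ring

theorem main (m : ℕ) (hm : m % 3 = 2) : 3 ∣ cubicPartition m := by
  set L := m with hL
  set Pp := ∏ i ∈ range (2 * L), indicatorSeries K {n : ℕ | (i + 1) ∣ n} with hPp
  set Qq := ∏ i ∈ range (2 * L), indicatorSeries K {n : ℕ | (2 * i + 2) ∣ n} with hQq
  set W := ∏ k ∈ Ico L (2 * L), ((1 : PS) - X ^ (2 * k + 2)) with hWdef
  -- the two inverse relations
  have hTB : (AO L * E L) * Pp = 1 := by
    rw [← A_split, hPp, ← Finset.prod_mul_distrib]
    rw [Finset.prod_congr rfl (fun i (_ : i ∈ range (2 * L)) =>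
      one_sub_mul_indicator (i + 1) (by omega))]
    exact Finset.prod_const_one
  have hBQ : E (2 * L) * Qq = 1 := by
    rw [E, hQq, ← Finset.prod_mul_distrib]
    rw [Finset.prod_congr rfl (fun i (_ : i ∈ range (2 * L)) =>
      one_sub_mul_indicator (2 * i + 2) (by omega))]
    exact Finset.prod_const_one
  have hW : E (2 * L) = E L * W := E_split (by omega)
  -- the main algebraic identity
  have hne : (AO L * E L) * E (2 * L) ≠ 0 :=
    mul_ne_zero (mul_ne_zero (AO_ne_zero L) (E_ne_zero L)) (E_ne_zero (2 * L))
  have hPQ : Pp * Qq = (E (2 * L) * (AO L) ^ 2) * ((Pp ^ 3 * Qq ^ 3 * (E L) ^ 3) * W) := by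
    apply mul_left_cancel₀ hne
    have lhs1 : ((AO L * E L) * E (2 * L)) * (Pp * Qq)
        = ((AO L * E L) * Pp) * (E (2 * L) * Qq) := by ring
    rw [lhs1, hTB, hBQ, mul_one]
    have rhs1 : ((AO L * E L) * E (2 * L)) *
        ((E (2 * L) * (AO L) ^ 2) * ((Pp ^ 3 * Qq ^ 3 * (E L) ^ 3) * W))
        = ((AO L * E L) * Pp) ^ 3 * ((((E L * W) * E (2 * L) ^ 2) * Qq ^ 3)) := by ring
    rw [rhs1, ← hW, hTB]
    have : (E (2 * L) * E (2 * L) ^ 2) * Qq ^ 3 = (E (2 * L) * Qq) ^ 3 := by ring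
    rw [this, hBQ]
    simp
  -- support facts
  have hSupP : Sup3 (Pp ^ 3) := by
    apply Sup3_inv (f := (AO L) ^ 3 * (E L) ^ 3)
    · rw [show (AO L) ^ 3 * (E L) ^ 3 * Pp ^ 3 = ((AO L * E L) * Pp) ^ 3 from by ring, hTB,
        one_pow]
    · exact Sup3_mul (Sup3_AO_cube L) (Sup3_E_cube L)
  have hSupQ : Sup3 (Qq ^ 3) := by
    apply Sup3_inv (f := (E (2 * L)) ^ 3)
    · rw [show (E (2 * L)) ^ 3 * Qq ^ 3 = (E (2 * L) * Qq) ^ 3 from by ring, hBQ, one_pow]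
    · exact Sup3_E_cube (2 * L)
  have hSupS : Sup3 (Pp ^ 3 * Qq ^ 3 * (E L) ^ 3) :=
    Sup3_mul (Sup3_mul hSupP hSupQ) (Sup3_E_cube L)
  -- the congruence
  have hMEq : MEq (2 * L + 1) (Pp * Qq) (Theta L * (Pp ^ 3 * Qq ^ 3 * (E L) ^ 3)) := by
    rw [hPQ]
    have c1 := E_AO_sq_MEq L
    have c2 : MEq (2 * L + 1) W 1 := by
      apply MEq.mono (t := 2 * L + 2) (by omega)
      apply MEq_prod_one
      intro k hk
      have := Finset.mem_Ico.mp hk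
      omega
    have c3 := c1.mul ((MEq.refl (2 * L + 1) (Pp ^ 3 * Qq ^ 3 * (E L) ^ 3)).mul c2)
    rw [mul_one] at c3
    exact c3
  have hcoeff : coeff m (Pp * Qq) = coeff m (Theta L * (Pp ^ 3 * Qq ^ 3 * (E L) ^ 3)) :=
    coeff_eq_of_MEq hMEq (by omega)
  -- the right-hand side vanishes in degree m
  have hzero : coeff m (Theta L * (Pp ^ 3 * Qq ^ 3 * (E L) ^ 3)) = 0 := by
    rw [coeff_mul]
    apply Finset.sum_eq_zero
    rintro ⟨a, b⟩ hab
    have hab' := Finset.HasAntidiagonal.mem_antidiagonal.mp hab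
    simp only at hab'
    by_cases ha : a % 3 = 2
    · rw [coeff_Theta L a ha, zero_mul]
    · have hb : ¬ (3 ∣ b) := by omega
      rw [hSupS b hb, mul_zero]
  -- identification of the coefficient with the cubic partition count
  have hcubic : ((cubicPartition m : ℕ) : K) = coeff m (Pp * Qq) := by
    rw [coeff_mul, Finset.Nat.sum_antidiagonal_eq_sum_range_succ_mk, cubicPartition,
      Nat.cast_sum]
    apply Finset.sum_congr rfl
    intro k hk
    have hkm : k ≤ m := by have := mem_range.mp hk; omega
    rw [Nat.cast_mul, coeff_P (2 * L) k (by omega), coeff_Q (2 * L) (m - k) (by omega)]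
  have : ((cubicPartition m : ℕ) : K) = 0 := by
    rw [hcubic, hcoeff, hzero]
  exact (ZMod.natCast_eq_zero_iff _ 3).mp this

end

end Cubic3

theorem cubicPartition_mod_three (n : ℕ) : 3 ∣ cubicPartition (3 * n + 2) :=
  Cubic3.main (3 * n + 2) (by omega)
end

section
/- Let a(n) be the cubic partition function. There are infinitely many nonnegative integers n such that a(n) is odd. -/
namespace CubicAux

open Finset PowerSeries

abbrev F2 := ZMod 2

/-- number of partitions of n -/
def pc (n : ℕ) : ℕ := Fintype.card (Nat.Partition n)

noncomputable def P : PowerSeries F2 := PowerSeries.mk fun n => (pc n : F2)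
noncomputable def A : PowerSeries F2 := PowerSeries.mk fun n => (cubicPartition n : F2)
def sigN (k : ℕ) : ℕ := ∑ d ∈ k.divisors, d
noncomputable def Sig : PowerSeries F2 := PowerSeries.mk fun k => (sigN k : F2)
/-- the operator q·d/dq on power series -/
noncomputable def Th (X : PowerSeries F2) : PowerSeries F2 :=
  PowerSeries.mk fun n => (n : F2) * coeff n X

lemma F2_mul_self : ∀ x : F2, x * x = x := by decide

lemma Th_mul (X Y : PowerSeries F2) : Th (X * Y) = Th X * Y + X * Th Y := by
  ext n
  simp only [Th, coeff_mk, map_add, coeff_mul, Finset.mul_sum, coeff_mk]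
  rw [← Finset.sum_add_distrib]
  apply Finset.sum_congr rfl
  intro p hp
  have h : p.1 + p.2 = n := Finset.HasAntidiagonal.mem_antidiagonal.mp hp
  have : ((n : F2)) = (p.1 : F2) + (p.2 : F2) := by
    rw [← Nat.cast_add, h]
  rw [this]
  ring

/-- coefficient of a square in char 2 -/
lemma coeff_sq (X : PowerSeries F2) (n : ℕ) :
    coeff n (X * X) = if Even n then coeff (n / 2) X else 0 := by
  rw [coeff_mul]
  have hsplit : Finset.HasAntidiagonal.antidiagonal n =
      (Finset.HasAntidiagonal.antidiagonal n).filter (fun p => p.1 = p.2) ∪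
      (Finset.HasAntidiagonal.antidiagonal n).filter (fun p => ¬ p.1 = p.2) :=
    (Finset.filter_union_filter_not_eq _ _).symm
  rw [hsplit, Finset.sum_union (Finset.disjoint_filter_filter_not _ _ _)]
  have hoff : ∑ p ∈ (Finset.HasAntidiagonal.antidiagonal n).filter (fun p => ¬ p.1 = p.2),
      coeff p.1 X * coeff p.2 X = 0 := by
    apply Finset.sum_involution (fun p _ => Prod.swap p)
    · intro p hp
      have : coeff p.2 X * coeff p.1 X = coeff p.1 X * coeff p.2 X := mul_comm _ _
      simp only [Prod.fst_swap, Prod.snd_swap, this]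
      have : ∀ x : F2, x + x = 0 := by decide
      exact this _
    · intro p hp _
      have h2 := (Finset.mem_filter.mp hp).2
      intro hc
      apply h2
      have := congrArg Prod.fst hc
      simp only [Prod.fst_swap] at this
      rw [← this]
    · intro p hp
      rcases Finset.mem_filter.mp hp with ⟨h1, h2⟩
      refine Finset.mem_filter.mpr ⟨?_, ?_⟩
      · rw [Finset.HasAntidiagonal.mem_antidiagonal] at h1 ⊢
        simpa [Nat.add_comm] using h1
      · simpa [eq_comm] using h2
    · intro p hp
      simp
  rw [hoff, add_zero]
  have hdiag : (Finset.HasAntidiagonal.antidiagonal n).filter (fun p => p.1 = p.2) =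
      if Even n then {(n / 2, n / 2)} else ∅ := by
    by_cases he : Even n
    · rw [if_pos he]
      obtain ⟨m, hm⟩ := he
      have hm2 : n / 2 = m := by omega
      ext ⟨a, b⟩
      simp only [Finset.mem_filter, Finset.HasAntidiagonal.mem_antidiagonal, Finset.mem_singleton,
        Prod.mk.injEq]
      constructor
      · rintro ⟨hab, hab2⟩
        constructor <;> omega
      · rintro ⟨ha, hb⟩
        constructor <;> omega
    · rw [if_neg he]
      ext ⟨a, b⟩
      simp only [Finset.mem_filter, Finset.HasAntidiagonal.mem_antidiagonal, Finset.notMem_empty,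
        iff_false, not_and]
      intro hab hc
      exact he ⟨a, by omega⟩
  rw [hdiag]
  by_cases he : Even n
  · rw [if_pos he, if_pos he, Finset.sum_singleton, F2_mul_self]
  · rw [if_neg he, if_neg he, Finset.sum_empty]

lemma map_half_sum (s : Multiset ℕ) (h : ∀ i ∈ s, Even i) :
    2 * (s.map (· / 2)).sum = s.sum := by
  induction s using Multiset.induction_on with
  | empty => simp
  | cons a t ih =>
    have ha : Even a := h a (Multiset.mem_cons_self a t)
    have ht : ∀ i ∈ t, Even i := fun i hi => h i (Multiset.mem_cons_of_mem hi)
    obtain ⟨b, hb⟩ := ha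
    simp only [Multiset.map_cons, Multiset.sum_cons, Nat.mul_add, ih ht]
    congr 1
    omega

def evenPartEquiv (k : ℕ) :
    {μ : Nat.Partition (2 * k) // ∀ i ∈ μ.parts, Even i} ≃ Nat.Partition k where
  toFun μ :=
    { parts := μ.1.parts.map (· / 2)
      parts_pos := by
        intro i hi
        obtain ⟨a, ha, rfl⟩ := Multiset.mem_map.mp hi
        have hpos := μ.1.parts_pos ha
        have heven := μ.2 a ha
        obtain ⟨b, hb⟩ := heven
        omega
      parts_sum := by
        have := map_half_sum μ.1.parts (μ.2)
        have hs := μ.1.parts_sum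
        omega }
  invFun l :=
    ⟨{ parts := l.parts.map (2 * ·)
       parts_pos := by
         intro i hi
         obtain ⟨a, ha, rfl⟩ := Multiset.mem_map.mp hi
         have := l.parts_pos ha
         omega
       parts_sum := by
         rw [Multiset.sum_map_mul_left]
         simp [l.parts_sum] },
     by
       intro i hi
       obtain ⟨a, ha, rfl⟩ := Multiset.mem_map.mp hi
       exact ⟨a, by ring⟩⟩
  left_inv μ := by
    apply Subtype.ext
    apply Nat.Partition.ext
    simp only [Multiset.map_map, Function.comp]
    calc μ.1.parts.map (fun a => 2 * (a / 2)) = μ.1.parts.map id := by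
          apply Multiset.map_congr rfl
          intro a ha
          obtain ⟨b, hb⟩ := μ.2 a ha
          simp only [id_eq]
          omega
      _ = μ.1.parts := Multiset.map_id _
  right_inv l := by
    apply Nat.Partition.ext
    simp only [Multiset.map_map, Function.comp]
    calc l.parts.map (fun a => 2 * a / 2) = l.parts.map id := by
          apply Multiset.map_congr rfl
          intro a ha
          simp only [id_eq]
          omega
      _ = l.parts := Multiset.map_id _

lemma card_evenPart (m : ℕ) :
    Fintype.card {μ : Nat.Partition m // ∀ i ∈ μ.parts, Even i} =
      if Even m then pc (m / 2) else 0 := by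
  by_cases he : Even m
  · rw [if_pos he]
    obtain ⟨k, hk⟩ := he
    have hm : m = 2 * k := by omega
    subst hm
    rw [Fintype.card_congr (evenPartEquiv k)]
    have h2 : 2 * k / 2 = k := by omega
    rw [h2]
    rfl
  · rw [if_neg he]
    rw [Fintype.card_eq_zero_iff]
    constructor
    intro μ
    apply he
    have : 2 ∣ μ.1.parts.sum := by
      apply Multiset.dvd_sum
      intro x hx
      exact (μ.2 x hx).two_dvd
    rw [μ.1.parts_sum] at this
    exact (even_iff_two_dvd).mpr this

lemma A_eq : A = P * (P * P) := by
  ext n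
  rw [coeff_mul, Finset.Nat.sum_antidiagonal_eq_sum_range_succ_mk]
  simp only [A, P, coeff_mk, cubicPartition, Nat.cast_sum, Nat.cast_mul]
  apply Finset.sum_congr rfl
  intro j hj
  congr 1
  rw [coeff_sq, card_evenPart]
  rcases Nat.even_or_odd (n - j) with he | ho
  · rw [if_pos he, if_pos he, coeff_mk]
  · rw [if_neg (Nat.not_even_iff_odd.mpr ho), if_neg (Nat.not_even_iff_odd.mpr ho), Nat.cast_zero]

lemma multiset_card_le_sum (s : Multiset ℕ) (h : ∀ x ∈ s, 0 < x) :
    Multiset.card s ≤ s.sum := by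
  induction s using Multiset.induction_on with
  | empty => simp
  | cons a t ih =>
    simp only [Multiset.card_cons, Multiset.sum_cons]
    have ha := h a (Multiset.mem_cons_self a t)
    have := ih (fun x hx => h x (Multiset.mem_cons_of_mem hx))
    omega

/-- removing `j` copies of the part `d` -/
def removeEquiv (n d j : ℕ) (hd : 0 < d) (hle : d * j ≤ n) :
    {l : Nat.Partition n // j ≤ l.parts.count d} ≃ Nat.Partition (n - d * j) where
  toFun l :=
    { parts := l.1.parts - Multiset.replicate j d
      parts_pos := by
        intro i hi
        exact l.1.parts_pos (Multiset.mem_of_le (Multiset.sub_le_self _ _) hi)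
      parts_sum := by
        have hrep : Multiset.replicate j d ≤ l.1.parts :=
          Multiset.le_count_iff_replicate_le.mp l.2
        have hcan : (l.1.parts - Multiset.replicate j d) + Multiset.replicate j d
            = l.1.parts := tsub_add_cancel_of_le hrep
        have := congrArg Multiset.sum hcan
        rw [Multiset.sum_add, Multiset.sum_replicate, smul_eq_mul, l.1.parts_sum] at this
        have hmul : j * d = d * j := Nat.mul_comm j d
        omega }
  invFun m :=
    ⟨{ parts := m.parts + Multiset.replicate j d
       parts_pos := by
         intro i hi
         rcases Multiset.mem_add.mp hi with h1 | h2
         · exact m.parts_pos h1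
         · rw [Multiset.eq_of_mem_replicate h2]; exact hd
       parts_sum := by
         rw [Multiset.sum_add, Multiset.sum_replicate, smul_eq_mul, m.parts_sum]
         have hmul : j * d = d * j := Nat.mul_comm j d
         omega },
     by
       simp only [Multiset.count_add, Multiset.count_replicate_self]
       omega⟩
  left_inv l := by
    apply Subtype.ext
    apply Nat.Partition.ext
    exact tsub_add_cancel_of_le (Multiset.le_count_iff_replicate_le.mp l.2)
  right_inv m := by
    apply Nat.Partition.ext
    simp

lemma card_count_ge (n d j : ℕ) (hd : 0 < d) :
    Fintype.card {l : Nat.Partition n // j ≤ l.parts.count d} =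
      if d * j ≤ n then pc (n - d * j) else 0 := by
  by_cases hle : d * j ≤ n
  · rw [if_pos hle, Fintype.card_congr (removeEquiv n d j hd hle)]
    rfl
  · rw [if_neg hle, Fintype.card_eq_zero_iff]
    constructor
    intro l
    apply hle
    have hrep : Multiset.replicate j d ≤ l.1.parts :=
      Multiset.le_count_iff_replicate_le.mp l.2
    have hcan := tsub_add_cancel_of_le hrep
    have := congrArg Multiset.sum hcan
    rw [Multiset.sum_add, Multiset.sum_replicate, smul_eq_mul, l.1.parts_sum] at this
    have hmul : j * d = d * j := Nat.mul_comm j d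
    omega

lemma parts_sum_eq (n : ℕ) (l : Nat.Partition n) :
    n = ∑ d ∈ Finset.Icc 1 n, d * l.parts.count d := by
  have h0 : l.parts.sum = n := l.parts_sum
  have h1 : (l.parts.map id).sum = ∑ m ∈ l.parts.toFinset, l.parts.count m • id m :=
    Finset.sum_multiset_map_count l.parts id
  rw [Multiset.map_id] at h1
  have hsub : l.parts.toFinset ⊆ Finset.Icc 1 n := by
    intro a ha
    rw [Multiset.mem_toFinset] at ha
    rw [Finset.mem_Icc]
    constructor
    · exact l.parts_pos ha
    · calc a ≤ l.parts.sum := Multiset.single_le_sum (fun x _ => Nat.zero_le x) a ha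
        _ = n := h0
  calc n = l.parts.sum := h0.symm
    _ = ∑ m ∈ l.parts.toFinset, l.parts.count m • id m := h1
    _ = ∑ m ∈ Finset.Icc 1 n, l.parts.count m • id m := by
        apply Finset.sum_subset hsub
        intro x _ hx
        rw [Multiset.mem_toFinset] at hx
        simp [Multiset.count_eq_zero_of_notMem hx]
    _ = ∑ d ∈ Finset.Icc 1 n, d * l.parts.count d := by
        apply Finset.sum_congr rfl
        intro d _
        simp only [id_eq, smul_eq_mul]
        ring

lemma count_le (n d : ℕ) (l : Nat.Partition n) : l.parts.count d ≤ n := by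
  calc l.parts.count d ≤ Multiset.card l.parts := Multiset.count_le_card _ _
    _ ≤ l.parts.sum := multiset_card_le_sum _ (fun x hx => l.parts_pos hx)
    _ = n := l.parts_sum

lemma mul_count_eq_sum (n d c : ℕ) (hc : c ≤ n) :
    d * c = ∑ j ∈ Finset.Icc 1 n, (if j ≤ c then d else 0) := by
  rw [← Finset.sum_filter]
  have hfil : (Finset.Icc 1 n).filter (fun j => j ≤ c) = Finset.Icc 1 c := by
    ext x
    simp only [Finset.mem_filter, Finset.mem_Icc]
    omega
  rw [hfil, Finset.sum_const, Nat.card_Icc]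
  simp only [smul_eq_mul]
  have : c + 1 - 1 = c := by omega
  rw [this, Nat.mul_comm]

/-- Euler's recurrence: n·p(n) = Σ σ(k) p(n-k), as an identity in ℕ. -/
lemma euler (n : ℕ) :
    n * pc n = ∑ k ∈ Finset.range (n + 1), sigN k * pc (n - k) := by
  classical
  have hLHS : n * pc n =
      ∑ p ∈ (Finset.Icc 1 n ×ˢ Finset.Icc 1 n).filter (fun p => p.1 * p.2 ≤ n),
        p.1 * pc (n - p.1 * p.2) := by
    calc n * pc n = ∑ _l : Nat.Partition n, n := by
          rw [Finset.sum_const, Finset.card_univ, smul_eq_mul, Nat.mul_comm]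
          rfl
      _ = ∑ l : Nat.Partition n, ∑ d ∈ Finset.Icc 1 n, d * l.parts.count d :=
          Finset.sum_congr rfl (fun l _ => parts_sum_eq n l)
      _ = ∑ d ∈ Finset.Icc 1 n, ∑ l : Nat.Partition n, d * l.parts.count d :=
          Finset.sum_comm
      _ = ∑ d ∈ Finset.Icc 1 n, ∑ l : Nat.Partition n, ∑ j ∈ Finset.Icc 1 n,
            (if j ≤ l.parts.count d then d else 0) := by
          apply Finset.sum_congr rfl; intro d _
          apply Finset.sum_congr rfl; intro l _
          exact mul_count_eq_sum n d _ (count_le n d l)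
      _ = ∑ d ∈ Finset.Icc 1 n, ∑ j ∈ Finset.Icc 1 n, ∑ l : Nat.Partition n,
            (if j ≤ l.parts.count d then d else 0) := by
          apply Finset.sum_congr rfl; intro d _
          exact Finset.sum_comm
      _ = ∑ d ∈ Finset.Icc 1 n, ∑ j ∈ Finset.Icc 1 n,
            (if d * j ≤ n then pc (n - d * j) else 0) * d := by
          apply Finset.sum_congr rfl; intro d hd
          apply Finset.sum_congr rfl; intro j _
          rw [← Finset.sum_filter, Finset.sum_const, smul_eq_mul]
          congr 1
          rw [← Fintype.card_subtype]
          exact card_count_ge n d j (Finset.mem_Icc.mp hd).1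
      _ = ∑ p ∈ (Finset.Icc 1 n ×ˢ Finset.Icc 1 n).filter (fun p => p.1 * p.2 ≤ n),
            p.1 * pc (n - p.1 * p.2) := by
          rw [← Finset.sum_product']
          rw [Finset.sum_filter]
          apply Finset.sum_congr rfl
          intro p _
          rw [ite_mul, zero_mul]
          by_cases hc : p.1 * p.2 ≤ n
          · rw [if_pos hc, if_pos hc, Nat.mul_comm]
          · rw [if_neg hc, if_neg hc]
  have hRHS : ∑ k ∈ Finset.range (n + 1), sigN k * pc (n - k)
      = ∑ x ∈ (Finset.range (n + 1)).sigma (fun k => k.divisorsAntidiagonal),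
          x.2.1 * pc (n - x.1) := by
    rw [Finset.sum_sigma]
    apply Finset.sum_congr rfl
    intro k _
    rw [sigN, Finset.sum_mul]
    exact (Nat.sum_divisorsAntidiagonal (fun d _e => d * pc (n - k))).symm
  rw [hLHS, hRHS]
  apply Finset.sum_nbij' (fun p => (⟨p.1 * p.2, (p.1, p.2)⟩ : (_ : ℕ) × (ℕ × ℕ)))
    (fun x => (x.2.1, x.2.2))
  · intro p hp
    rw [Finset.mem_filter, Finset.mem_product, Finset.mem_Icc, Finset.mem_Icc] at hp
    obtain ⟨⟨⟨h1a, _⟩, ⟨h2a, _⟩⟩, hle⟩ := hp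
    rw [Finset.mem_sigma, Finset.mem_range, Nat.mem_divisorsAntidiagonal]
    dsimp only
    refine ⟨by omega, rfl, ?_⟩
    positivity
  · intro x hx
    rw [Finset.mem_sigma] at hx
    obtain ⟨hx1, hx2⟩ := hx
    rw [Nat.mem_divisorsAntidiagonal] at hx2
    rw [Finset.mem_range] at hx1
    rw [Finset.mem_filter, Finset.mem_product, Finset.mem_Icc, Finset.mem_Icc]
    have h1 : x.2.1 * x.2.2 = x.1 := hx2.1
    have h0 : x.1 ≠ 0 := hx2.2
    have ha : 0 < x.2.1 := by
      rcases Nat.eq_zero_or_pos x.2.1 with h | h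
      · exfalso; apply h0; rw [← h1, h, Nat.zero_mul]
      · exact h
    have hb : 0 < x.2.2 := by
      rcases Nat.eq_zero_or_pos x.2.2 with h | h
      · exfalso; apply h0; rw [← h1, h]; ring
      · exact h
    have hle : x.2.1 * x.2.2 ≤ n := by rw [h1]; omega
    refine ⟨⟨⟨ha, ?_⟩, ⟨hb, ?_⟩⟩, hle⟩
    · calc x.2.1 ≤ x.2.1 * x.2.2 := Nat.le_mul_of_pos_right _ hb
        _ ≤ n := hle
    · calc x.2.2 ≤ x.2.1 * x.2.2 := Nat.le_mul_of_pos_left _ ha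
        _ ≤ n := hle
  · intro p _
    rfl
  · intro x hx
    rw [Finset.mem_sigma] at hx
    obtain ⟨_, hx2⟩ := hx
    rw [Nat.mem_divisorsAntidiagonal] at hx2
    have h1 : x.2.1 * x.2.2 = x.1 := hx2.1
    obtain ⟨k, d, e⟩ := x
    simp only at h1 ⊢
    subst h1
    rfl
  · intro p _
    rfl

lemma ThP : Th P = P * Sig := by
  ext n
  have h := congrArg (fun m : ℕ => (m : F2)) (euler n)
  simp only [Nat.cast_sum, Nat.cast_mul] at h
  rw [mul_comm P Sig, coeff_mul, Finset.Nat.sum_antidiagonal_eq_sum_range_succ_mk]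
  simp only [Th, P, Sig, coeff_mk]
  exact h

lemma Th_sq (X : PowerSeries F2) : Th (X * X) = 0 := by
  ext n
  rw [Th, coeff_mk, coeff_sq, map_zero]
  by_cases he : Even n
  · rw [if_pos he]
    obtain ⟨m, hm⟩ := he
    have h2 : (n : F2) = (m : F2) + (m : F2) := by rw [hm]; push_cast; ring
    have hzero : ∀ x : F2, x + x = 0 := by decide
    rw [h2, hzero, zero_mul]
  · rw [if_neg he, mul_zero]

lemma ThA : Th A = A * Sig := by
  rw [A_eq, Th_mul, Th_sq, mul_zero, add_zero, ThP]
  ring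

lemma natCast_F2_one_iff (m : ℕ) : (m : F2) = 1 ↔ m % 2 = 1 := by
  constructor
  · intro h
    rcases Nat.mod_two_eq_zero_or_one m with h0 | h1
    · exfalso
      obtain ⟨c, hc⟩ := Nat.dvd_of_mod_eq_zero h0
      rw [hc] at h
      push_cast at h
      have h2 : (2 : F2) = 0 := by decide
      rw [h2, zero_mul] at h
      exact one_ne_zero h.symm
    · exact h1
  · intro h
    have hm : m = 2 * (m / 2) + 1 := by omega
    rw [hm]
    push_cast
    have h2 : (2 : F2) = 0 := by decide
    rw [h2, zero_mul, zero_add]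

lemma card_divisors_odd_iff (k : ℕ) (hk : k ≠ 0) :
    k.divisors.card % 2 = 1 ↔ IsSquare k := by
  classical
  set L := k.divisors.filter (fun d => d * d < k) with hL
  set E := k.divisors.filter (fun d => d * d = k) with hE
  set U := k.divisors.filter (fun d => k < d * d) with hU
  have hsplit : k.divisors.card = L.card + E.card + U.card := by
    have h1 : k.divisors = L ∪ E ∪ U := by
      ext d
      simp only [hL, hE, hU, Finset.mem_union, Finset.mem_filter]
      constructor
      · intro hd
        rcases Nat.lt_trichotomy (d * d) k with h | h | h
        · exact Or.inl (Or.inl ⟨hd, h⟩)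
        · exact Or.inl (Or.inr ⟨hd, h⟩)
        · exact Or.inr ⟨hd, h⟩
      · rintro ((⟨hd, _⟩ | ⟨hd, _⟩) | ⟨hd, _⟩) <;> exact hd
    rw [h1, Finset.card_union_of_disjoint, Finset.card_union_of_disjoint]
    · rw [Finset.disjoint_filter]
      intro d _ hd
      omega
    · apply Finset.disjoint_union_left.mpr
      constructor
      · rw [Finset.disjoint_filter]
        intro d _ hd
        omega
      · rw [Finset.disjoint_filter]
        intro d _ hd
        omega
  have hLU : L.card = U.card := by
    apply Finset.card_bij' (fun d _ => k / d) (fun d _ => k / d)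
    · intro d hd
      rw [hL, Finset.mem_filter, Nat.mem_divisors] at hd
      obtain ⟨⟨hdvd, _⟩, hlt⟩ := hd
      obtain ⟨e, he⟩ := hdvd
      have hdpos : 0 < d := Nat.pos_of_dvd_of_pos ⟨e, he⟩ (Nat.pos_of_ne_zero hk)
      have hke : k / d = e := by rw [he]; exact Nat.mul_div_cancel_left e hdpos
      rw [hU, Finset.mem_filter, Nat.mem_divisors, hke]
      refine ⟨⟨⟨d, by rw [he]; ring⟩, hk⟩, ?_⟩
      have hde : d < e := by
        by_contra hcon
        push_neg at hcon
        have : e * e ≤ d * d := Nat.mul_le_mul hcon hcon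
        have : d * e ≤ d * d := Nat.mul_le_mul_left d hcon
        omega
      have hepos : 0 < e :=
        Nat.pos_of_dvd_of_pos ⟨d, by rw [he]; ring⟩ (Nat.pos_of_ne_zero hk)
      calc k = d * e := he
        _ < e * e := Nat.mul_lt_mul_of_pos_right hde hepos
    · intro d hd
      rw [hU, Finset.mem_filter, Nat.mem_divisors] at hd
      obtain ⟨⟨hdvd, _⟩, hlt⟩ := hd
      obtain ⟨e, he⟩ := hdvd
      have hdpos : 0 < d := Nat.pos_of_dvd_of_pos ⟨e, he⟩ (Nat.pos_of_ne_zero hk)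
      have hke : k / d = e := by rw [he]; exact Nat.mul_div_cancel_left e hdpos
      rw [hL, Finset.mem_filter, Nat.mem_divisors, hke]
      refine ⟨⟨⟨d, by rw [he]; ring⟩, hk⟩, ?_⟩
      have hepos : 0 < e := by
        rcases Nat.eq_zero_or_pos e with h0 | h; · exfalso; apply hk; rw [he, h0]; ring
        exact h
      have hed : e < d := by
        by_contra hcon
        push_neg at hcon
        have : d * d ≤ d * e := Nat.mul_le_mul_left d hcon
        omega
      calc e * e < d * e := Nat.mul_lt_mul_of_pos_right hed hepos
        _ = k := he.symm
    · intro d hd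
      rw [hL, Finset.mem_filter, Nat.mem_divisors] at hd
      obtain ⟨⟨hdvd, _⟩, _⟩ := hd
      obtain ⟨e, he⟩ := hdvd
      have hdpos : 0 < d := Nat.pos_of_dvd_of_pos ⟨e, he⟩ (Nat.pos_of_ne_zero hk)
      have hke : k / d = e := by rw [he]; exact Nat.mul_div_cancel_left e hdpos
      rw [hke]
      have hepos : 0 < e := by
        rcases Nat.eq_zero_or_pos e with h0 | h; · exfalso; apply hk; rw [he, h0]; ring
        exact h
      rw [he]
      rw [Nat.mul_div_cancel _ hepos]
    · intro d hd
      rw [hU, Finset.mem_filter, Nat.mem_divisors] at hd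
      obtain ⟨⟨hdvd, _⟩, _⟩ := hd
      obtain ⟨e, he⟩ := hdvd
      have hdpos : 0 < d := Nat.pos_of_dvd_of_pos ⟨e, he⟩ (Nat.pos_of_ne_zero hk)
      have hke : k / d = e := by rw [he]; exact Nat.mul_div_cancel_left e hdpos
      rw [hke]
      have hepos : 0 < e := by
        rcases Nat.eq_zero_or_pos e with h0 | h; · exfalso; apply hk; rw [he, h0]; ring
        exact h
      rw [he]
      rw [Nat.mul_div_cancel _ hepos]
  have hEcard : E.card = if IsSquare k then 1 else 0 := by
    by_cases hsq : IsSquare k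
    · rw [if_pos hsq]
      obtain ⟨r, hr⟩ := hsq
      have hrpos : 0 < r := by
        rcases Nat.eq_zero_or_pos r with h0 | h
        · exfalso; apply hk; rw [hr, h0]
        · exact h
      have : E = {r} := by
        ext d
        rw [hE, Finset.mem_filter, Nat.mem_divisors, Finset.mem_singleton]
        constructor
        · rintro ⟨_, hdd⟩
          have h2 : d * d = r * r := by rw [hdd, hr]
          exact Nat.mul_self_inj.mp h2
        · intro hd
          subst hd
          exact ⟨⟨⟨d, hr⟩, hk⟩, hr.symm⟩
      rw [this, Finset.card_singleton]
    · rw [if_neg hsq]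
      rw [Finset.card_eq_zero]
      rw [hE, Finset.filter_eq_empty_iff]
      intro d _
      intro hdd
      exact hsq ⟨d, hdd.symm⟩
  rw [hsplit, hEcard]
  by_cases hsq : IsSquare k
  · rw [if_pos hsq]
    simp only [hsq, iff_true]
    omega
  · rw [if_neg hsq]
    simp only [hsq, iff_false]
    omega

lemma natCast_F2_zero_iff (m : ℕ) : (m : F2) = 0 ↔ m % 2 = 0 := by
  constructor
  · intro h
    rcases Nat.mod_two_eq_zero_or_one m with h0 | h1
    · exact h0
    · exfalso
      rw [(natCast_F2_one_iff m).mpr h1] at h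
      exact one_ne_zero h
  · intro h
    have hm : m = 2 * (m / 2) := by omega
    rw [hm]
    push_cast
    have h2 : (2 : F2) = 0 := by decide
    rw [h2, zero_mul]

lemma sigN_cast_odd (k : ℕ) (hodd : k % 2 = 1) :
    (sigN k : F2) = (k.divisors.card : F2) := by
  rw [sigN, Nat.cast_sum, Finset.card_eq_sum_ones, Nat.cast_sum]
  apply Finset.sum_congr rfl
  intro d hd
  have hdvd := (Nat.mem_divisors.mp hd).1
  have hdodd : d % 2 = 1 := by
    rcases Nat.mod_two_eq_zero_or_one d with h0 | h1
    · exfalso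
      have h2 : 2 ∣ d := Nat.dvd_of_mod_eq_zero h0
      have h3 : 2 ∣ k := h2.trans hdvd
      omega
    · exact h1
  rw [Nat.cast_one, (natCast_F2_one_iff d).mpr hdodd]

lemma sig_one_iff_of_odd (k : ℕ) (hodd : k % 2 = 1) :
    (sigN k : F2) = 1 ↔ IsSquare k := by
  have hk : k ≠ 0 := by omega
  rw [sigN_cast_odd k hodd, natCast_F2_one_iff]
  exact card_divisors_odd_iff k hk

lemma no_AP_squares (c s : ℕ) (hs : 0 < s) (h : ∀ k, IsSquare (c + k * s)) : False := by
  have hy : ∀ k : ℕ, ∃ y, y * y = c + k * s := by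
    intro k
    obtain ⟨r, hr⟩ := h k
    exact ⟨r, hr.symm⟩
  choose y hy using hy
  have hmono : ∀ k, y k < y (k + 1) := by
    intro k
    by_contra hcon
    push_neg at hcon
    have h1 : y (k + 1) * y (k + 1) ≤ y k * y k := Nat.mul_le_mul hcon hcon
    have e1 := hy k
    have e2 := hy (k + 1)
    have e4 : c + (k + 1) * s = c + k * s + s := by ring
    omega
  have hbound : ∀ k, 2 * y k + 1 ≤ s := by
    intro k
    have hsucc : y k + 1 ≤ y (k + 1) := hmono k
    have h1 : (y k + 1) * (y k + 1) ≤ y (k + 1) * y (k + 1) := Nat.mul_le_mul hsucc hsucc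
    have e1 := hy k
    have e2 := hy (k + 1)
    have e3 : (y k + 1) * (y k + 1) = y k * y k + 2 * y k + 1 := by ring
    have e4 : c + (k + 1) * s = c + k * s + s := by ring
    omega
  set k := s * s + 1 with hk
  have h5 := hy k
  have h6 : y k ≤ s := by have := hbound k; omega
  have h7 : y k * y k ≤ s * s := Nat.mul_le_mul h6 h6
  have h8 : k ≤ k * s := Nat.le_mul_of_pos_right k hs
  omega

lemma partition_zero_parts (μ : Nat.Partition 0) : μ.parts = 0 := by
  have h := μ.parts_sum
  by_contra hne
  obtain ⟨a, ha⟩ := Multiset.exists_mem_of_ne_zero hne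
  have h1 := μ.parts_pos ha
  have h2 : a ≤ μ.parts.sum := Multiset.single_le_sum (fun x _ => Nat.zero_le x) a ha
  omega

def emptyPartition : Nat.Partition 0 where
  parts := 0
  parts_pos := by intro i hi; simp at hi
  parts_sum := rfl

lemma cubic_zero : cubicPartition 0 = 1 := by
  rw [cubicPartition, Finset.sum_range_one]
  have h1 : Fintype.card (Nat.Partition 0) = 1 := by
    rw [Fintype.card_eq_one_iff]
    refine ⟨emptyPartition, fun y => ?_⟩
    apply Nat.Partition.ext
    rw [partition_zero_parts y]
    rfl
  have h2 : Fintype.card {μ : Nat.Partition (0 - 0) // ∀ i ∈ μ.parts, Even i} = 1 := by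
    rw [Fintype.card_eq_one_iff]
    refine ⟨⟨emptyPartition, by intro i hi; simp [emptyPartition] at hi⟩, fun y => ?_⟩
    apply Subtype.ext
    apply Nat.Partition.ext
    rw [partition_zero_parts y.1]
    rfl
  rw [h1, h2]

end CubicAux

theorem cubicPartition_infinitely_odd : ∀ N : ℕ, ∃ n : ℕ, N ≤ n ∧ Odd (cubicPartition n) := by
  classical
  by_contra hcon
  push_neg at hcon
  obtain ⟨N, hN⟩ := hcon
  open CubicAux PowerSeries in
  -- the coefficients of A vanish from N on
  have hvanN : ∀ n, N ≤ n → coeff n A = 0 := by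
    intro n hn
    have hodd := hN n hn
    have heven : cubicPartition n % 2 = 0 := by
      rcases Nat.mod_two_eq_zero_or_one (cubicPartition n) with h0 | h1
      · exact h0
      · exact absurd (Nat.odd_iff.mpr h1) hodd
    show (PowerSeries.coeff n) A = 0
    rw [A, coeff_mk]
    exact (natCast_F2_zero_iff _).mpr heven
  have hA0 : coeff 0 A = 1 := by
    rw [A, coeff_mk, cubic_zero, Nat.cast_one]
  -- the maximal support element dd
  set S := (Finset.range (N + 1)).filter (fun i => coeff i A ≠ 0) with hS
  have hS0 : (0 : ℕ) ∈ S := by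
    rw [hS, Finset.mem_filter, Finset.mem_range]
    exact ⟨by omega, by rw [hA0]; exact one_ne_zero⟩
  have hSne : S.Nonempty := ⟨0, hS0⟩
  set dd := S.max' hSne with hdd
  have hvanish : ∀ i, dd < i → coeff i A = 0 := by
    intro i hi
    by_cases hiN : N ≤ i
    · exact hvanN i hiN
    · by_contra hne
      have himem : i ∈ S := by
        rw [hS, Finset.mem_filter, Finset.mem_range]
        exact ⟨by omega, hne⟩
      have := S.le_max' i himem
      omega
  -- the linear recurrence for the coefficients of Sig
  have hrec : ∀ n, dd < n → coeff n Sig =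
      ∑ i ∈ Finset.range dd, coeff (i + 1) A * coeff (n - (i + 1)) Sig := by
    intro n hn
    have h1 : coeff n (Th A) = 0 := by
      rw [Th, coeff_mk, hvanish n hn, mul_zero]
    rw [ThA, coeff_mul, Finset.Nat.sum_antidiagonal_eq_sum_range_succ_mk] at h1
    have h2 : ∑ i ∈ Finset.range (n + 1), coeff i A * coeff (n - i) Sig =
        ∑ i ∈ Finset.range (dd + 1), coeff i A * coeff (n - i) Sig := by
      symm
      apply Finset.sum_subset
      · apply Finset.range_subset_range.mpr
        omega
      · intro x _ hx
        rw [Finset.mem_range] at hx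
        push_neg at hx
        rw [hvanish x (by omega), zero_mul]
    rw [h2, Finset.sum_range_succ'] at h1
    rw [hA0, one_mul, Nat.sub_zero] at h1
    -- h1 : Σ_{i<dd} coeff (i+1) A * coeff (n-(i+1)) Sig + coeff n Sig = 0
    have hchar : ∀ x y : F2, x + y = 0 → y = x := by decide
    exact hchar _ _ h1
  -- eventual periodicity of Sig by pigeonhole
  set base := dd + 1 with hbase
  set W : ℕ → (Fin dd → F2) := fun m => fun i => coeff (base + m + i) Sig with hW
  have key : ∀ m₁ m₂, m₁ < m₂ → W m₁ = W m₂ → False := by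
    intro m₁ m₂ hlt hWeq
    have claim : ∀ t, coeff (base + m₁ + t) Sig = coeff (base + m₂ + t) Sig := by
      intro t
      induction t using Nat.strong_induction_on with
      | _ t ih =>
        by_cases ht : t < dd
        · exact congrFun hWeq ⟨t, ht⟩
        · push_neg at ht
          rw [hrec (base + m₁ + t) (by omega), hrec (base + m₂ + t) (by omega)]
          apply Finset.sum_congr rfl
          intro i hi
          rw [Finset.mem_range] at hi
          have e1 : base + m₁ + t - (i + 1) = base + m₁ + (t - (i + 1)) := by omega
          have e2 : base + m₂ + t - (i + 1) = base + m₂ + (t - (i + 1)) := by omega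
          rw [e1, e2, ih (t - (i + 1)) (by omega)]
    -- periodicity with period τ := m₂ - m₁ from M := base + m₁ on
    set τ := m₂ - m₁ with hτ
    have hτpos : 0 < τ := by omega
    set M := base + m₁ with hM
    have hper : ∀ n, M ≤ n → coeff (n + τ) Sig = coeff n Sig := by
      intro n hn
      have h1 := claim (n - M)
      have e1 : base + m₁ + (n - M) = n := by omega
      have e2 : base + m₂ + (n - M) = n + τ := by omega
      rw [e1, e2] at h1
      exact h1.symm
    -- an odd square ≥ M
    set j := 2 * M + 1 with hj
    set c := j * j with hc
    have hcM : M ≤ c := by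
      calc M ≤ j := by omega
        _ ≤ j * j := Nat.le_mul_of_pos_right j (by omega)
    have hcodd : c % 2 = 1 := by
      have : Odd (j * j) := (Nat.odd_iff.mpr (by omega)).mul (Nat.odd_iff.mpr (by omega))
      rw [hc]
      exact Nat.odd_iff.mp this
    have hstep : ∀ k : ℕ, coeff (c + k * (2 * τ)) Sig = 1 := by
      intro k
      induction k with
      | zero =>
        simp only [Nat.zero_mul, Nat.add_zero]
        show (coeff c) Sig = 1
        rw [Sig, coeff_mk]
        exact (sig_one_iff_of_odd c hcodd).mpr ⟨j, rfl⟩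
      | succ k ihk =>
        have e1 : c + (k + 1) * (2 * τ) = (c + k * (2 * τ) + τ) + τ := by ring
        rw [e1, hper _ (by omega), hper _ (by omega)]
        exact ihk
    -- all members of the AP are squares: contradiction
    apply no_AP_squares c (2 * τ) (by omega)
    intro k
    have hodd : (c + k * (2 * τ)) % 2 = 1 := by
      have h2 : 2 ∣ k * (2 * τ) := ⟨k * τ, by ring⟩
      omega
    have h1 := hstep k
    rw [Sig, coeff_mk] at h1
    exact (sig_one_iff_of_odd _ hodd).mp h1
  obtain ⟨m₁, m₂, hne, hWeq⟩ := Finite.exists_ne_map_eq_of_infinite W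
  rcases hne.lt_or_gt with h | h
  · exact key m₁ m₂ h hWeq
  · exact key m₂ m₁ h hWeq.symm
end
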